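/- Let Ω ⊂ ℝ² be a bounded open set, 𝒦(x,y) = x − y², Ω⁺ = {(x,y) ∈ Ω : 𝒦 > 0} and Ω⁻ = Ω \ Ω⁺, both assumed nonempty, μ₁ = sup_{Ω⁺} 𝒦 and μ₂ = inf_{Ω⁻} 𝒦 < 0. Let κ ∈ [1,2] and Lu = (x − y²)u_xx + u_yy + κ u_x. For δ > 0 set Q₁ = exp(2δμ₁), Q₂ = exp(μ₂), b(x,y) = exp(2δ𝒦/Q₁) on Ω⁺ and b(x,y) = exp(6δ𝒦/Q₂) on Ω⁻, c(y) = 2(2δ − 1)y, and Mu = −u + b u_x + c u_y. Then there exists δ₀ > 0 (depending on Ω) such that for all δ ∈ (0, δ₀] and all u ∈ C₀^∞(Ω), ∫_Ω Mu · Lu dx dy ≥ δ ∫_Ω (|𝒦| u_x² + u_y²) dx dy. -/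

import Mathlib

open MeasureTheory Real

/-- Partial derivative in the first variable. -/
noncomputable def pdx (u : ℝ × ℝ → ℝ) (p : ℝ × ℝ) : ℝ := deriv (fun t => u (t, p.2)) p.1

/-- Partial derivative in the second variable. -/
noncomputable def pdy (u : ℝ × ℝ → ℝ) (p : ℝ × ℝ) : ℝ := deriv (fun t => u (p.1, t)) p.2

/-- The type-change function 𝒦(x,y) = x - y². -/
noncomputable def Kcp (p : ℝ × ℝ) : ℝ := p.1 - p.2 ^ 2

/-- The cold-plasma operator Lu = (x - y²)u_xx + u_yy + κ u_x. -/
noncomputable def Lop (κ : ℝ) (u : ℝ × ℝ → ℝ) (p : ℝ × ℝ) : ℝ :=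
  Kcp p * pdx (pdx u) p + pdy (pdy u) p + κ * pdx u p

/-- The coefficient b: exp(2δ𝒦/Q₁) on Ω⁺ = {𝒦 > 0}, exp(6δ𝒦/Q₂) on Ω⁻,
where Q₁ = exp(2δμ₁) and Q₂ = exp(μ₂). -/
noncomputable def bMult (δ μ₁ μ₂ : ℝ) (p : ℝ × ℝ) : ℝ :=
  if Kcp p > 0 then Real.exp (2 * δ * Kcp p / Real.exp (2 * δ * μ₁))
  else Real.exp (6 * δ * Kcp p / Real.exp μ₂)

/-- The multiplier Mu = -u + b u_x + c u_y with c = 2(2δ - 1)y. -/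
noncomputable def MMult (δ μ₁ μ₂ : ℝ) (u : ℝ × ℝ → ℝ) (p : ℝ × ℝ) : ℝ :=
  -u p + bMult δ μ₁ μ₂ p * pdx u p + 2 * (2 * δ - 1) * p.2 * pdy u p

namespace CP

noncomputable def d1 (f : ℝ × ℝ → ℝ) (p : ℝ × ℝ) : ℝ := fderiv ℝ f p (1, 0)
noncomputable def d2 (f : ℝ × ℝ → ℝ) (p : ℝ × ℝ) : ℝ := fderiv ℝ f p (0, 1)

lemma hasDerivAt_slice1 {f : ℝ × ℝ → ℝ} {x y : ℝ} (hf : DifferentiableAt ℝ f (x, y)) :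
    HasDerivAt (fun t => f (t, y)) (d1 f (x, y)) x := by
  have h : HasDerivAt (fun t : ℝ => (t, y)) ((1:ℝ), (0:ℝ)) x :=
    (hasDerivAt_id x).prodMk (hasDerivAt_const x y)
  exact hf.hasFDerivAt.comp_hasDerivAt x h

lemma hasDerivAt_slice2 {f : ℝ × ℝ → ℝ} {x y : ℝ} (hf : DifferentiableAt ℝ f (x, y)) :
    HasDerivAt (fun t => f (x, t)) (d2 f (x, y)) y := by
  have h : HasDerivAt (fun t : ℝ => (x, t)) ((0:ℝ), (1:ℝ)) y :=
    (hasDerivAt_const y x).prodMk (hasDerivAt_id y)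
  exact hf.hasFDerivAt.comp_hasDerivAt y h

lemma pdx_eq {f : ℝ × ℝ → ℝ} (hf : Differentiable ℝ f) : pdx f = d1 f := by
  funext p
  have := (hasDerivAt_slice1 (f := f) (x := p.1) (y := p.2) (hf _)).deriv
  simpa [pdx] using this

lemma pdy_eq {f : ℝ × ℝ → ℝ} (hf : Differentiable ℝ f) : pdy f = d2 f := by
  funext p
  have := (hasDerivAt_slice2 (f := f) (x := p.1) (y := p.2) (hf _)).deriv
  simpa [pdy] using this

lemma contDiff_d1 {f : ℝ × ℝ → ℝ} (hf : ContDiff ℝ (⊤ : ℕ∞) f) : ContDiff ℝ (⊤ : ℕ∞) (d1 f) :=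
  (hf.fderiv_right (by simp)).clm_apply contDiff_const

lemma contDiff_d2 {f : ℝ × ℝ → ℝ} (hf : ContDiff ℝ (⊤ : ℕ∞) f) : ContDiff ℝ (⊤ : ℕ∞) (d2 f) :=
  (hf.fderiv_right (by simp)).clm_apply contDiff_const

lemma d1_d2_symm {f : ℝ × ℝ → ℝ} (hf : ContDiff ℝ (⊤ : ℕ∞) f) (p : ℝ × ℝ) :
    d1 (d2 f) p = d2 (d1 f) p := by
  have hsymm : IsSymmSndFDerivAt ℝ f p :=
    (hf.contDiffAt).isSymmSndFDerivAt (by rw [minSmoothness_of_isRCLikeNormedField]; exact (WithTop.coe_le_coe.mpr (le_top : (2:ℕ∞) ≤ ⊤)))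
  have hdf : DifferentiableAt ℝ (fderiv ℝ f) p :=
    ((hf.fderiv_right (m := (⊤ : ℕ∞)) (by simp)).differentiable (by simp)) p
  have h1 : d1 (d2 f) p = fderiv ℝ (fderiv ℝ f) p (1, 0) (0, 1) := by
    unfold d1 d2
    rw [fderiv_clm_apply hdf (differentiableAt_const _)]
    simp
  have h2 : d2 (d1 f) p = fderiv ℝ (fderiv ℝ f) p (0, 1) (1, 0) := by
    unfold d1 d2
    rw [fderiv_clm_apply hdf (differentiableAt_const _)]
    simp
  rw [h1, h2, hsymm.eq]

lemma tsupport_d1 {f : ℝ × ℝ → ℝ} : tsupport (d1 f) ⊆ tsupport f := by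
  refine closure_minimal ?_ isClosed_closure
  intro p hp
  have : fderiv ℝ f p ≠ 0 := by
    intro h; apply hp; simp [d1, h]
  exact support_fderiv_subset ℝ this

lemma tsupport_d2 {f : ℝ × ℝ → ℝ} : tsupport (d2 f) ⊆ tsupport f := by
  refine closure_minimal ?_ isClosed_closure
  intro p hp
  have : fderiv ℝ f p ≠ 0 := by
    intro h; apply hp; simp [d2, h]
  exact support_fderiv_subset ℝ this

noncomputable def wcoef (δ μ₁ μ₂ : ℝ) (p : ℝ × ℝ) : ℝ :=
  if Kcp p > 0 then 2 * δ / Real.exp (2 * δ * μ₁) else 6 * δ / Real.exp μ₂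

lemma continuous_Kcp : Continuous Kcp := by
  unfold Kcp; fun_prop

lemma bMult_eq (δ μ₁ μ₂ : ℝ) (p : ℝ × ℝ) :
    bMult δ μ₁ μ₂ p = if Kcp p ≤ 0 then Real.exp (6 * δ * Kcp p / Real.exp μ₂)
      else Real.exp (2 * δ * Kcp p / Real.exp (2 * δ * μ₁)) := by
  unfold bMult
  by_cases h : Kcp p > 0
  · rw [if_pos h, if_neg (by linarith)]
  · rw [if_neg h, if_pos (by linarith [not_lt.mp h])]

lemma continuous_bMult (δ μ₁ μ₂ : ℝ) : Continuous (bMult δ μ₁ μ₂) := by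
  have : bMult δ μ₁ μ₂ = fun p => if Kcp p ≤ 0 then Real.exp (6 * δ * Kcp p / Real.exp μ₂)
      else Real.exp (2 * δ * Kcp p / Real.exp (2 * δ * μ₁)) := funext (bMult_eq δ μ₁ μ₂)
  rw [this]
  apply Continuous.if_le
  · exact ((continuous_const.mul continuous_Kcp).div_const _).rexp
  · exact ((continuous_const.mul continuous_Kcp).div_const _).rexp
  · exact continuous_Kcp
  · exact continuous_const
  · intro p hp
    rw [hp]; simp

lemma measurable_wcoef (δ μ₁ μ₂ : ℝ) : Measurable (wcoef δ μ₁ μ₂) := by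
  unfold wcoef
  exact Measurable.ite (measurableSet_lt measurable_const continuous_Kcp.measurable)
    measurable_const measurable_const

lemma wcoef_bound (δ μ₁ μ₂ : ℝ) (p : ℝ × ℝ) :
    |wcoef δ μ₁ μ₂ p| ≤ |2 * δ / Real.exp (2 * δ * μ₁)| + |6 * δ / Real.exp μ₂| := by
  unfold wcoef
  split <;> [linarith [abs_nonneg (6 * δ / Real.exp μ₂)];
    linarith [abs_nonneg (2 * δ / Real.exp (2 * δ * μ₁))]]

lemma bMult_pos (δ μ₁ μ₂ : ℝ) (p : ℝ × ℝ) : 0 < bMult δ μ₁ μ₂ p := by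
  unfold bMult; split <;> exact Real.exp_pos _

/-- Chain rule for `bMult` along a curve, away from `Kcp = 0`. -/
lemma bMult_hasDerivAt {δ μ₁ μ₂ : ℝ} {γ : ℝ → ℝ × ℝ} {t k : ℝ}
    (hK : HasDerivAt (fun s => Kcp (γ s)) k t) (h0 : Kcp (γ t) ≠ 0) :
    HasDerivAt (fun s => bMult δ μ₁ μ₂ (γ s))
      (wcoef δ μ₁ μ₂ (γ t) * bMult δ μ₁ μ₂ (γ t) * k) t := by
  have hc : ContinuousAt (fun s => Kcp (γ s)) t := hK.continuousAt
  rcases lt_or_gt_of_ne h0 with hneg | hpos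
  · -- Kcp < 0 near t
    have hev : ∀ᶠ s in nhds t, Kcp (γ s) < 0 := hc.eventually (eventually_lt_nhds hneg)
    have heq : (fun s => Real.exp (6 * δ * Kcp (γ s) / Real.exp μ₂)) =ᶠ[nhds t]
        (fun s => bMult δ μ₁ μ₂ (γ s)) := by
      filter_upwards [hev] with s hs
      unfold bMult; rw [if_neg (by linarith)]
    have hd : HasDerivAt (fun s => Real.exp (6 * δ * Kcp (γ s) / Real.exp μ₂))
        (Real.exp (6 * δ * Kcp (γ t) / Real.exp μ₂) * (6 * δ / Real.exp μ₂ * k)) t := by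
      have h1 : HasDerivAt (fun s => 6 * δ * Kcp (γ s) / Real.exp μ₂)
          (6 * δ / Real.exp μ₂ * k) t := by
        have h2 := (hK.const_mul (6 * δ)).div_const (Real.exp μ₂)
        have h3 : 6 * δ * k / Real.exp μ₂ = 6 * δ / Real.exp μ₂ * k := by ring
        simpa [h3] using h2
      exact h1.exp
    have := hd.congr_of_eventuallyEq heq.symm
    refine this.congr_deriv ?_
    unfold bMult wcoef
    rw [if_neg (by linarith), if_neg (by linarith)]
    ring
  · have hev : ∀ᶠ s in nhds t, Kcp (γ s) > 0 :=
      hc.eventually (eventually_gt_nhds hpos)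
    have heq : (fun s => Real.exp (2 * δ * Kcp (γ s) / Real.exp (2 * δ * μ₁))) =ᶠ[nhds t]
        (fun s => bMult δ μ₁ μ₂ (γ s)) := by
      filter_upwards [hev] with s hs
      unfold bMult; rw [if_pos hs]
    have hd : HasDerivAt (fun s => Real.exp (2 * δ * Kcp (γ s) / Real.exp (2 * δ * μ₁)))
        (Real.exp (2 * δ * Kcp (γ t) / Real.exp (2 * δ * μ₁)) * (2 * δ / Real.exp (2 * δ * μ₁) * k)) t := by
      have h1 : HasDerivAt (fun s => 2 * δ * Kcp (γ s) / Real.exp (2 * δ * μ₁))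
          (2 * δ / Real.exp (2 * δ * μ₁) * k) t := by
        have h2 := (hK.const_mul (2 * δ)).div_const (Real.exp (2 * δ * μ₁))
        have h3 : 2 * δ * k / Real.exp (2 * δ * μ₁) = 2 * δ / Real.exp (2 * δ * μ₁) * k := by ring
        simpa [h3] using h2
      exact h1.exp
    have := hd.congr_of_eventuallyEq heq.symm
    refine this.congr_deriv ?_
    unfold bMult wcoef
    rw [if_pos hpos, if_pos hpos]
    ring


variable (δ μ₁ μ₂ κ : ℝ) (u : ℝ × ℝ → ℝ)

/-- The "potential" whose x-derivative appears in the divergence identity. -/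
noncomputable def Pfun (p : ℝ × ℝ) : ℝ :=
  (1 - κ)/2 * (u p)^2 - u p * Kcp p * d1 u p
    + (1/2) * bMult δ μ₁ μ₂ p * Kcp p * (d1 u p)^2
    - (1/2) * bMult δ μ₁ μ₂ p * (d2 u p)^2
    + (2*(2*δ-1)*p.2) * Kcp p * d1 u p * d2 u p

/-- The "potential" whose y-derivative appears in the divergence identity. -/
noncomputable def Rfun (p : ℝ × ℝ) : ℝ :=
  -(u p) * d2 u p + bMult δ μ₁ μ₂ p * d1 u p * d2 u p
    - (1/2) * (2*(2*δ-1)*p.2) * Kcp p * (d1 u p)^2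
    + (1/2) * (2*(2*δ-1)*p.2) * (d2 u p)^2

/-- Explicit formula for `∂ₓ Pfun` (valid off `Kcp = 0`). -/
noncomputable def gxF (p : ℝ × ℝ) : ℝ :=
  (1-κ) * u p * d1 u p - Kcp p * (d1 u p)^2 - u p * d1 u p - u p * Kcp p * d1 (d1 u) p
    + (1/2) * (wcoef δ μ₁ μ₂ p * bMult δ μ₁ μ₂ p * Kcp p + bMult δ μ₁ μ₂ p) * (d1 u p)^2
    + bMult δ μ₁ μ₂ p * Kcp p * d1 u p * d1 (d1 u) p
    - (1/2) * wcoef δ μ₁ μ₂ p * bMult δ μ₁ μ₂ p * (d2 u p)^2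
    - bMult δ μ₁ μ₂ p * d2 u p * d1 (d2 u) p
    + (2*(2*δ-1)*p.2) * d1 u p * d2 u p
    + (2*(2*δ-1)*p.2) * Kcp p * d1 (d1 u) p * d2 u p
    + (2*(2*δ-1)*p.2) * Kcp p * d1 u p * d1 (d2 u) p

/-- Explicit formula for `∂_y Rfun` (valid off `Kcp = 0`). -/
noncomputable def gyF (p : ℝ × ℝ) : ℝ :=
  -((d2 u p)^2 + u p * d2 (d2 u) p)
    + (-2*p.2*(wcoef δ μ₁ μ₂ p * bMult δ μ₁ μ₂ p)) * d1 u p * d2 u p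
    + bMult δ μ₁ μ₂ p * (d2 (d1 u) p * d2 u p + d1 u p * d2 (d2 u) p)
    - (1/2) * (2*(2*δ-1) * Kcp p + (2*(2*δ-1)*p.2) * (-2*p.2)) * (d1 u p)^2
    - (2*(2*δ-1)*p.2) * Kcp p * d1 u p * d2 (d1 u) p
    + (1/2) * (2*(2*δ-1)) * (d2 u p)^2
    + (2*(2*δ-1)*p.2) * d2 u p * d2 (d2 u) p

/-- The quadratic form `Q = α u_x² + β u_x u_y + γ u_y²`. -/
noncomputable def QF (p : ℝ × ℝ) : ℝ :=
  (2*δ*Kcp p - (1/2) * wcoef δ μ₁ μ₂ p * bMult δ μ₁ μ₂ p * Kcp p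
      + (κ - 1/2) * bMult δ μ₁ μ₂ p + 2*(1-2*δ)*p.2^2) * (d1 u p)^2
    + (2*p.2*(wcoef δ μ₁ μ₂ p * bMult δ μ₁ μ₂ p) + (κ-1)*(2*(2*δ-1)*p.2)) * (d1 u p * d2 u p)
    + (2 - 2*δ + wcoef δ μ₁ μ₂ p * bMult δ μ₁ μ₂ p / 2) * (d2 u p)^2

variable {u}

lemma identity (hu : ContDiff ℝ (⊤ : ℕ∞) u) (p : ℝ × ℝ) :
    MMult δ μ₁ μ₂ u p * Lop κ u p = QF δ μ₁ μ₂ κ u p + gxF δ μ₁ μ₂ κ u p + gyF δ μ₁ μ₂ u p := by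
  have hd := hu.differentiable (by simp)
  have h1 := (contDiff_d1 hu).differentiable (by simp)
  have h2 := (contDiff_d2 hu).differentiable (by simp)
  rw [MMult, Lop, pdx_eq hd, pdy_eq hd, pdx_eq h1, pdy_eq h2, QF, gxF, gyF,
    d1_d2_symm hu p]
  ring

lemma hasDerivAt_P (hu : ContDiff ℝ (⊤ : ℕ∞) u) {x y : ℝ} (h0 : Kcp (x, y) ≠ 0) :
    HasDerivAt (fun t => Pfun δ μ₁ μ₂ κ u (t, y)) (gxF δ μ₁ μ₂ κ u (x, y)) x := by
  have hd := hu.differentiable (by simp)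
  have hU : HasDerivAt (fun t => u (t, y)) (d1 u (x, y)) x := hasDerivAt_slice1 (hd _)
  have hA : HasDerivAt (fun t => d1 u (t, y)) (d1 (d1 u) (x, y)) x :=
    hasDerivAt_slice1 ((contDiff_d1 hu).differentiable (by simp) _)
  have hB : HasDerivAt (fun t => d2 u (t, y)) (d1 (d2 u) (x, y)) x :=
    hasDerivAt_slice1 ((contDiff_d2 hu).differentiable (by simp) _)
  have hK : HasDerivAt (fun t => Kcp (t, y)) 1 x := by
    have : HasDerivAt (fun t : ℝ => t - y ^ 2) 1 x := (hasDerivAt_id x).sub_const (y ^ 2)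
    simpa [Kcp] using this
  have hv : HasDerivAt (fun t => bMult δ μ₁ μ₂ (t, y))
      (wcoef δ μ₁ μ₂ (x, y) * bMult δ μ₁ μ₂ (x, y) * 1) x :=
    bMult_hasDerivAt (γ := fun t => (t, y)) hK h0
  have H := ((((((hU.mul hU).const_mul ((1-κ)/2)).sub ((hU.mul hK).mul hA)).add
      (((hv.mul hK).mul (hA.mul hA)).const_mul (1/2))).sub
      ((hv.mul (hB.mul hB)).const_mul (1/2))).add
      (((hK.mul hA).mul hB).const_mul (2*(2*δ-1)*y)))
  have H2 := H.congr_of_eventuallyEq (f₁ := fun t => Pfun δ μ₁ μ₂ κ u (t, y))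
    (Filter.Eventually.of_forall (fun t => by simp only [Pfun, Pi.mul_apply, Pi.add_apply, Pi.sub_apply, Pi.neg_apply, Pi.pow_apply]; ring))
  refine H2.congr_deriv ?_
  simp only [gxF, Pi.mul_apply, Pi.add_apply, Pi.sub_apply, Pi.neg_apply, Pi.pow_apply]
  ring

lemma hasDerivAt_R (hu : ContDiff ℝ (⊤ : ℕ∞) u) {x y : ℝ} (h0 : Kcp (x, y) ≠ 0) :
    HasDerivAt (fun t => Rfun δ μ₁ μ₂ u (x, t)) (gyF δ μ₁ μ₂ u (x, y)) y := by
  have hd := hu.differentiable (by simp)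
  have hU : HasDerivAt (fun t => u (x, t)) (d2 u (x, y)) y := hasDerivAt_slice2 (hd _)
  have hA : HasDerivAt (fun t => d1 u (x, t)) (d2 (d1 u) (x, y)) y :=
    hasDerivAt_slice2 ((contDiff_d1 hu).differentiable (by simp) _)
  have hB : HasDerivAt (fun t => d2 u (x, t)) (d2 (d2 u) (x, y)) y :=
    hasDerivAt_slice2 ((contDiff_d2 hu).differentiable (by simp) _)
  have hK : HasDerivAt (fun t => Kcp (x, t)) (-(2*y)) y := by
    have h := ((hasDerivAt_pow 2 y).const_sub x)
    have : HasDerivAt (fun t : ℝ => x - t ^ 2) (-(2*y)) y := by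
      refine h.congr_deriv ?_; push_cast; ring
    simpa [Kcp] using this
  have hc : HasDerivAt (fun t : ℝ => 2*(2*δ-1)*t) (2*(2*δ-1)) y := by
    simpa using (hasDerivAt_id y).const_mul (2*(2*δ-1))
  have hv : HasDerivAt (fun t => bMult δ μ₁ μ₂ (x, t))
      (wcoef δ μ₁ μ₂ (x, y) * bMult δ μ₁ μ₂ (x, y) * (-(2*y))) y :=
    bMult_hasDerivAt (γ := fun t => (x, t)) hK h0
  have H := ((((hU.mul hB).neg.add ((hv.mul hA).mul hB)).sub
      ((((hc.mul hK).mul (hA.mul hA))).const_mul (1/2))).add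
      ((hc.mul (hB.mul hB)).const_mul (1/2)))
  have H2 := H.congr_of_eventuallyEq (f₁ := fun t => Rfun δ μ₁ μ₂ u (x, t))
    (Filter.Eventually.of_forall (fun t => by simp only [Rfun, Pi.mul_apply, Pi.add_apply, Pi.sub_apply, Pi.neg_apply, Pi.pow_apply]; ring))
  refine H2.congr_deriv ?_
  simp only [gyF, Pi.mul_apply, Pi.add_apply, Pi.sub_apply, Pi.neg_apply, Pi.pow_apply]
  ring

/-! ### Vanishing off the support -/

lemma vanish_u {p : ℝ × ℝ} (hp : p ∉ tsupport u) : u p = 0 :=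
  image_eq_zero_of_notMem_tsupport hp

lemma vanish_d1 {p : ℝ × ℝ} (hp : p ∉ tsupport u) : d1 u p = 0 :=
  image_eq_zero_of_notMem_tsupport (fun h => hp (tsupport_d1 h))

lemma vanish_d2 {p : ℝ × ℝ} (hp : p ∉ tsupport u) : d2 u p = 0 :=
  image_eq_zero_of_notMem_tsupport (fun h => hp (tsupport_d2 h))

lemma vanish_d11 {p : ℝ × ℝ} (hp : p ∉ tsupport u) : d1 (d1 u) p = 0 :=
  image_eq_zero_of_notMem_tsupport (fun h => hp (tsupport_d1 (tsupport_d1 h)))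

lemma vanish_d21 {p : ℝ × ℝ} (hp : p ∉ tsupport u) : d1 (d2 u) p = 0 :=
  image_eq_zero_of_notMem_tsupport (fun h => hp (tsupport_d2 (tsupport_d1 h)))

lemma vanish_d12 {p : ℝ × ℝ} (hp : p ∉ tsupport u) : d2 (d1 u) p = 0 :=
  image_eq_zero_of_notMem_tsupport (fun h => hp (tsupport_d1 (tsupport_d2 h)))

lemma vanish_d22 {p : ℝ × ℝ} (hp : p ∉ tsupport u) : d2 (d2 u) p = 0 :=
  image_eq_zero_of_notMem_tsupport (fun h => hp (tsupport_d2 (tsupport_d2 h)))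

lemma vanish_P {p : ℝ × ℝ} (hp : p ∉ tsupport u) : Pfun δ μ₁ μ₂ κ u p = 0 := by
  simp [Pfun, vanish_u hp, vanish_d1 hp, vanish_d2 hp]

lemma vanish_R {p : ℝ × ℝ} (hp : p ∉ tsupport u) : Rfun δ μ₁ μ₂ u p = 0 := by
  simp [Rfun, vanish_u hp, vanish_d1 hp, vanish_d2 hp]

lemma vanish_gx {p : ℝ × ℝ} (hp : p ∉ tsupport u) : gxF δ μ₁ μ₂ κ u p = 0 := by
  simp [gxF, vanish_u hp, vanish_d1 hp, vanish_d2 hp, vanish_d11 hp, vanish_d21 hp]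

lemma vanish_gy {p : ℝ × ℝ} (hp : p ∉ tsupport u) : gyF δ μ₁ μ₂ u p = 0 := by
  simp [gyF, vanish_u hp, vanish_d1 hp, vanish_d2 hp, vanish_d12 hp, vanish_d22 hp]

/-! ### Integrability -/

/-- General combination whose integrability we establish once and for all. -/
noncomputable def comb (C₀ C₁ C₂ : ℝ × ℝ → ℝ) (p : ℝ × ℝ) : ℝ :=
  C₀ p + bMult δ μ₁ μ₂ p * C₁ p + wcoef δ μ₁ μ₂ p * (bMult δ μ₁ μ₂ p * C₂ p)

variable {δ μ₁ μ₂ κ} {C₀ C₁ C₂ : ℝ × ℝ → ℝ}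

lemma comb_integrable (h₀ : Continuous C₀) (hs₀ : HasCompactSupport C₀)
    (h₁ : Continuous C₁) (hs₁ : HasCompactSupport C₁)
    (h₂ : Continuous C₂) (hs₂ : HasCompactSupport C₂) :
    Integrable (comb δ μ₁ μ₂ C₀ C₁ C₂) := by
  have hb := continuous_bMult δ μ₁ μ₂
  have i₀ : Integrable C₀ := h₀.integrable_of_hasCompactSupport hs₀
  have i₁ : Integrable (fun p => bMult δ μ₁ μ₂ p * C₁ p) :=
    (hb.mul h₁).integrable_of_hasCompactSupport (hs₁.mul_left)
  have i₂' : Integrable (fun p => bMult δ μ₁ μ₂ p * C₂ p) :=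
    (hb.mul h₂).integrable_of_hasCompactSupport (hs₂.mul_left)
  have i₂ : Integrable (fun p => wcoef δ μ₁ μ₂ p * (bMult δ μ₁ μ₂ p * C₂ p)) := by
    apply i₂'.bdd_mul (c := |2 * δ / Real.exp (2 * δ * μ₁)| + |6 * δ / Real.exp μ₂|) ((measurable_wcoef δ μ₁ μ₂).aestronglyMeasurable)
    exact Filter.Eventually.of_forall (fun p => by
      simpa [Real.norm_eq_abs] using wcoef_bound δ μ₁ μ₂ p)
  exact (i₀.add i₁).add i₂

lemma comb_intervalIntegrable (h₀ : Continuous C₀) (hs₀ : HasCompactSupport C₀)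
    (h₁ : Continuous C₁) (hs₁ : HasCompactSupport C₁)
    (h₂ : Continuous C₂) (hs₂ : HasCompactSupport C₂)
    (γ : ℝ → ℝ × ℝ) (hγ : Continuous γ) (hγm : Measurable γ) (a b : ℝ) :
    IntervalIntegrable (fun t => comb δ μ₁ μ₂ C₀ C₁ C₂ (γ t)) volume a b := by
  have hb := continuous_bMult δ μ₁ μ₂
  have i₀ : IntervalIntegrable (fun t => C₀ (γ t)) volume a b :=
    (h₀.comp hγ).intervalIntegrable a b
  have i₁ : IntervalIntegrable (fun t => bMult δ μ₁ μ₂ (γ t) * C₁ (γ t)) volume a b :=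
    ((hb.comp hγ).mul (h₁.comp hγ)).intervalIntegrable a b
  have i₂ : IntervalIntegrable
      (fun t => wcoef δ μ₁ μ₂ (γ t) * (bMult δ μ₁ μ₂ (γ t) * C₂ (γ t))) volume a b := by
    rw [intervalIntegrable_iff]
    obtain ⟨M, hM⟩ := ((hb.mul h₂).bounded_above_of_compact_support (hs₂.mul_left))
    apply Measure.integrableOn_of_bounded
      (M := (|2 * δ / Real.exp (2 * δ * μ₁)| + |6 * δ / Real.exp μ₂|) * |M|)
      (measure_Ioc_lt_top).ne
    · exact (((measurable_wcoef δ μ₁ μ₂).comp hγm).mul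
        (((continuous_bMult δ μ₁ μ₂).measurable.comp hγm).mul
          (h₂.measurable.comp hγm))).aestronglyMeasurable
    · refine Filter.Eventually.of_forall (fun t => ?_)
      have h1 := wcoef_bound δ μ₁ μ₂ (γ t)
      have h2 := hM (γ t)
      set W := |2 * δ / Real.exp (2 * δ * μ₁)| + |6 * δ / Real.exp μ₂| with hW
      calc ‖wcoef δ μ₁ μ₂ (γ t) * (bMult δ μ₁ μ₂ (γ t) * C₂ (γ t))‖
          = |wcoef δ μ₁ μ₂ (γ t)| * ‖bMult δ μ₁ μ₂ (γ t) * C₂ (γ t)‖ := by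
            rw [Real.norm_eq_abs, abs_mul, Real.norm_eq_abs]
        _ ≤ W * (|M| : ℝ) := by
            apply mul_le_mul h1 (le_trans (by simpa using h2) (le_abs_self M))
              (norm_nonneg _) (le_trans (abs_nonneg _) h1)
  exact (i₀.add i₁).add i₂

lemma hcs_of_vanish {f : ℝ × ℝ → ℝ} (hcs : HasCompactSupport u)
    (h : ∀ p, p ∉ tsupport u → f p = 0) : HasCompactSupport f := by
  apply IsCompact.of_isClosed_subset hcs isClosed_closure
  apply closure_minimal _ (isClosed_tsupport u)
  intro p hp
  by_contra hq
  exact hp (h p hq)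

/-! ### Fundamental theorem of calculus with exceptional points -/

lemma ftc_seg {F g : ℝ → ℝ} {m a b : ℝ} (hab : a ≤ b) (hF : Continuous F)
    (hi : ∀ c d : ℝ, IntervalIntegrable g volume c d)
    (hd : ∀ x ∈ Set.Ioo a b, x ≠ m → HasDerivAt F (g x) x) :
    ∫ x in a..b, g x = F b - F a := by
  rcases le_or_gt m a with h | h
  · exact intervalIntegral.integral_eq_sub_of_hasDerivAt_of_le hab hF.continuousOn
      (fun x hx => hd x hx (by rintro rfl; exact absurd hx.1 (not_lt.mpr h))) (hi a b)
  rcases le_or_gt b m with h2 | h2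
  · exact intervalIntegral.integral_eq_sub_of_hasDerivAt_of_le hab hF.continuousOn
      (fun x hx => hd x hx (by rintro rfl; exact absurd hx.2 (not_lt.mpr h2))) (hi a b)
  · have e1 : ∫ x in a..m, g x = F m - F a :=
      intervalIntegral.integral_eq_sub_of_hasDerivAt_of_le h.le hF.continuousOn
        (fun x hx => hd x ⟨hx.1, hx.2.trans h2⟩ (ne_of_lt hx.2)) (hi a m)
    have e2 : ∫ x in m..b, g x = F b - F m :=
      intervalIntegral.integral_eq_sub_of_hasDerivAt_of_le h2.le hF.continuousOn
        (fun x hx => hd x ⟨h.trans hx.1, hx.2⟩ (ne_of_gt hx.1)) (hi m b)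
    rw [← intervalIntegral.integral_add_adjacent_intervals (hi a m) (hi m b), e1, e2]
    ring

lemma ftc_seg2 {F g : ℝ → ℝ} {m₁ m₂ a b : ℝ} (hab : a ≤ b) (hF : Continuous F)
    (hi : ∀ c d : ℝ, IntervalIntegrable g volume c d)
    (hd : ∀ x, x ≠ m₁ → x ≠ m₂ → HasDerivAt F (g x) x) :
    ∫ x in a..b, g x = F b - F a := by
  set c := max a (min b m₁) with hc
  have hac : a ≤ c := le_max_left _ _
  have hcb : c ≤ b := max_le hab (min_le_left _ _)
  have e1 : ∫ x in a..c, g x = F c - F a := by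
    refine ftc_seg (m := m₂) hac hF hi (fun x hx hxm => hd x ?_ hxm)
    rcases le_or_gt m₁ a with hma | hma
    · exfalso
      have : c ≤ a := max_le le_rfl ((min_le_right _ _).trans hma)
      exact absurd (hx.2.trans_le this) (not_lt.mpr hx.1.le)
    · have : c ≤ m₁ := max_le hma.le (min_le_right _ _)
      exact ne_of_lt (hx.2.trans_le this)
  have e2 : ∫ x in c..b, g x = F b - F c := by
    refine ftc_seg (m := m₂) hcb hF hi (fun x hx hxm => hd x ?_ hxm)
    rcases le_or_gt b m₁ with hbm | hbm
    · exact ne_of_lt (hx.2.trans_le hbm)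
    · have : m₁ ≤ c := le_max_of_le_right (le_min hbm.le le_rfl)
      exact ne_of_gt (this.trans_lt hx.1)
  rw [← intervalIntegral.integral_add_adjacent_intervals (hi a c) (hi c b), e1, e2]
  ring

/-! ### Decompositions of `gxF`, `gyF`, `QF` -/

variable (δ μ₁ μ₂ κ u)

noncomputable def C0x (p : ℝ × ℝ) : ℝ :=
  (1-κ) * u p * d1 u p - Kcp p * (d1 u p)^2 - u p * d1 u p - u p * Kcp p * d1 (d1 u) p
    + (2*(2*δ-1)*p.2) * d1 u p * d2 u p + (2*(2*δ-1)*p.2) * Kcp p * d1 (d1 u) p * d2 u p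
    + (2*(2*δ-1)*p.2) * Kcp p * d1 u p * d1 (d2 u) p
noncomputable def C1x (p : ℝ × ℝ) : ℝ :=
  (1/2)*(d1 u p)^2 + Kcp p * d1 u p * d1 (d1 u) p - d2 u p * d1 (d2 u) p
noncomputable def C2x (p : ℝ × ℝ) : ℝ :=
  (1/2)*Kcp p*(d1 u p)^2 - (1/2)*(d2 u p)^2

noncomputable def C0y (p : ℝ × ℝ) : ℝ :=
  -((d2 u p)^2 + u p * d2 (d2 u) p)
    - (1/2) * (2*(2*δ-1) * Kcp p + (2*(2*δ-1)*p.2) * (-2*p.2)) * (d1 u p)^2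
    - (2*(2*δ-1)*p.2) * Kcp p * d1 u p * d2 (d1 u) p
    + (1/2) * (2*(2*δ-1)) * (d2 u p)^2 + (2*(2*δ-1)*p.2) * d2 u p * d2 (d2 u) p
noncomputable def C1y (p : ℝ × ℝ) : ℝ :=
  d2 (d1 u) p * d2 u p + d1 u p * d2 (d2 u) p
noncomputable def C2y (p : ℝ × ℝ) : ℝ :=
  -2*p.2 * d1 u p * d2 u p

noncomputable def C0q (p : ℝ × ℝ) : ℝ :=
  (2*δ*Kcp p + 2*(1-2*δ)*p.2^2) * (d1 u p)^2
    + (κ-1)*(2*(2*δ-1)*p.2) * (d1 u p * d2 u p) + (2-2*δ)*(d2 u p)^2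
noncomputable def C1q (p : ℝ × ℝ) : ℝ := (κ - 1/2) * (d1 u p)^2
noncomputable def C2q (p : ℝ × ℝ) : ℝ :=
  -(1/2)*Kcp p*(d1 u p)^2 + 2*p.2 * (d1 u p * d2 u p) + (1/2)*(d2 u p)^2

lemma gxF_eq : gxF δ μ₁ μ₂ κ u = comb δ μ₁ μ₂ (C0x δ κ u) (C1x u) (C2x u) :=
  funext fun p => by simp only [gxF, comb, C0x, C1x, C2x]; ring

lemma gyF_eq : gyF δ μ₁ μ₂ u = comb δ μ₁ μ₂ (C0y δ u) (C1y u) (C2y u) :=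
  funext fun p => by simp only [gyF, comb, C0y, C1y, C2y]; ring

lemma QF_eq : QF δ μ₁ μ₂ κ u = comb δ μ₁ μ₂ (C0q δ κ u) (C1q κ u) (C2q u) :=
  funext fun p => by simp only [QF, comb, C0q, C1q, C2q]; ring

variable {δ μ₁ μ₂ κ u}

section contC
variable (hu : ContDiff ℝ (⊤ : ℕ∞) u) (hcs : HasCompactSupport u)
include hu

lemma cont_pack : Continuous u ∧ Continuous (d1 u) ∧ Continuous (d2 u)
    ∧ Continuous (d1 (d1 u)) ∧ Continuous (d1 (d2 u)) ∧ Continuous (d2 (d1 u))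
    ∧ Continuous (d2 (d2 u)) :=
  ⟨hu.continuous, (contDiff_d1 hu).continuous, (contDiff_d2 hu).continuous,
    (contDiff_d1 (contDiff_d1 hu)).continuous, (contDiff_d1 (contDiff_d2 hu)).continuous,
    (contDiff_d2 (contDiff_d1 hu)).continuous, (contDiff_d2 (contDiff_d2 hu)).continuous⟩

lemma cont_C0x : Continuous (C0x δ κ u) := by
  obtain ⟨c1, c2, c3, c4, c5, c6, c7⟩ := cont_pack hu
  unfold C0x
  have := continuous_Kcp
  continuity

lemma cont_C1x : Continuous (C1x u) := by
  obtain ⟨c1, c2, c3, c4, c5, c6, c7⟩ := cont_pack hu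
  unfold C1x
  have := continuous_Kcp
  continuity

lemma cont_C2x : Continuous (C2x u) := by
  obtain ⟨c1, c2, c3, c4, c5, c6, c7⟩ := cont_pack hu
  unfold C2x
  have := continuous_Kcp
  continuity

lemma cont_C0y : Continuous (C0y δ u) := by
  obtain ⟨c1, c2, c3, c4, c5, c6, c7⟩ := cont_pack hu
  unfold C0y
  have := continuous_Kcp
  continuity

lemma cont_C1y : Continuous (C1y u) := by
  obtain ⟨c1, c2, c3, c4, c5, c6, c7⟩ := cont_pack hu
  unfold C1y
  continuity

lemma cont_C2y : Continuous (C2y u) := by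
  obtain ⟨c1, c2, c3, c4, c5, c6, c7⟩ := cont_pack hu
  unfold C2y
  continuity

lemma cont_C0q : Continuous (C0q δ κ u) := by
  obtain ⟨c1, c2, c3, c4, c5, c6, c7⟩ := cont_pack hu
  unfold C0q
  have := continuous_Kcp
  continuity

lemma cont_C1q : Continuous (C1q κ u) := by
  obtain ⟨c1, c2, c3, c4, c5, c6, c7⟩ := cont_pack hu
  unfold C1q
  continuity

lemma cont_C2q : Continuous (C2q u) := by
  obtain ⟨c1, c2, c3, c4, c5, c6, c7⟩ := cont_pack hu
  unfold C2q
  have := continuous_Kcp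
  continuity

lemma cont_P : Continuous (Pfun δ μ₁ μ₂ κ u) := by
  obtain ⟨c1, c2, c3, c4, c5, c6, c7⟩ := cont_pack hu
  unfold Pfun
  have := continuous_Kcp
  have := continuous_bMult δ μ₁ μ₂
  continuity

lemma cont_R : Continuous (Rfun δ μ₁ μ₂ u) := by
  obtain ⟨c1, c2, c3, c4, c5, c6, c7⟩ := cont_pack hu
  unfold Rfun
  have := continuous_Kcp
  have := continuous_bMult δ μ₁ μ₂
  continuity

include hcs

lemma hcs_C0x : HasCompactSupport (C0x δ κ u) :=
  hcs_of_vanish hcs fun p hp => by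
    simp [C0x, vanish_u hp, vanish_d1 hp, vanish_d2 hp, vanish_d11 hp, vanish_d21 hp]
lemma hcs_C1x : HasCompactSupport (C1x u) :=
  hcs_of_vanish hcs fun p hp => by
    simp [C1x, vanish_d1 hp, vanish_d2 hp, vanish_d11 hp, vanish_d21 hp]
lemma hcs_C2x : HasCompactSupport (C2x u) :=
  hcs_of_vanish hcs fun p hp => by simp [C2x, vanish_d1 hp, vanish_d2 hp]
lemma hcs_C0y : HasCompactSupport (C0y δ u) :=
  hcs_of_vanish hcs fun p hp => by
    simp [C0y, vanish_u hp, vanish_d1 hp, vanish_d2 hp, vanish_d12 hp, vanish_d22 hp]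
lemma hcs_C1y : HasCompactSupport (C1y u) :=
  hcs_of_vanish hcs fun p hp => by
    simp [C1y, vanish_d1 hp, vanish_d2 hp, vanish_d12 hp, vanish_d22 hp]
lemma hcs_C2y : HasCompactSupport (C2y u) :=
  hcs_of_vanish hcs fun p hp => by simp [C2y, vanish_d1 hp, vanish_d2 hp]
lemma hcs_C0q : HasCompactSupport (C0q δ κ u) :=
  hcs_of_vanish hcs fun p hp => by simp [C0q, vanish_d1 hp, vanish_d2 hp]
lemma hcs_C1q : HasCompactSupport (C1q κ u) :=
  hcs_of_vanish hcs fun p hp => by simp [C1q, vanish_d1 hp]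
lemma hcs_C2q : HasCompactSupport (C2q u) :=
  hcs_of_vanish hcs fun p hp => by simp [C2q, vanish_d1 hp, vanish_d2 hp]

lemma gx_integrable : Integrable (gxF δ μ₁ μ₂ κ u) := by
  rw [gxF_eq]
  exact comb_integrable (cont_C0x hu) (hcs_C0x hu hcs) (cont_C1x hu) (hcs_C1x hu hcs)
    (cont_C2x hu) (hcs_C2x hu hcs)

lemma gy_integrable : Integrable (gyF δ μ₁ μ₂ u) := by
  rw [gyF_eq]
  exact comb_integrable (cont_C0y hu) (hcs_C0y hu hcs) (cont_C1y hu) (hcs_C1y hu hcs)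
    (cont_C2y hu) (hcs_C2y hu hcs)

lemma q_integrable : Integrable (QF δ μ₁ μ₂ κ u) := by
  rw [QF_eq]
  exact comb_integrable (cont_C0q hu) (hcs_C0q hu hcs) (cont_C1q hu) (hcs_C1q hu hcs)
    (cont_C2q hu) (hcs_C2q hu hcs)

lemma gx_slice_intervalIntegrable (y a b : ℝ) :
    IntervalIntegrable (fun x => gxF δ μ₁ μ₂ κ u (x, y)) volume a b := by
  have := gxF_eq δ μ₁ μ₂ κ u
  have h : (fun x => gxF δ μ₁ μ₂ κ u (x, y))
      = fun x => comb δ μ₁ μ₂ (C0x δ κ u) (C1x u) (C2x u) ((fun t => (t, y)) x) := by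
    rw [this]
  rw [h]
  exact comb_intervalIntegrable (cont_C0x hu) (hcs_C0x hu hcs) (cont_C1x hu) (hcs_C1x hu hcs)
    (cont_C2x hu) (hcs_C2x hu hcs) _ (continuous_id.prodMk continuous_const)
    (measurable_id.prodMk measurable_const) a b

lemma gy_slice_intervalIntegrable (x a b : ℝ) :
    IntervalIntegrable (fun y => gyF δ μ₁ μ₂ u (x, y)) volume a b := by
  have h : (fun y => gyF δ μ₁ μ₂ u (x, y))
      = fun y => comb δ μ₁ μ₂ (C0y δ u) (C1y u) (C2y u) ((fun t => (x, t)) y) := by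
    rw [gyF_eq]
  rw [h]
  exact comb_intervalIntegrable (cont_C0y hu) (hcs_C0y hu hcs) (cont_C1y hu) (hcs_C1y hu hcs)
    (cont_C2y hu) (hcs_C2y hu hcs) _ (continuous_const.prodMk continuous_id)
    (measurable_const.prodMk measurable_id) a b

end contC

section inner
variable (hu : ContDiff ℝ (⊤ : ℕ∞) u) (hcs : HasCompactSupport u)
include hu hcs

lemma inner_x_zero (y : ℝ) : (∫ x : ℝ, gxF δ μ₁ μ₂ κ u (x, y)) = 0 := by
  obtain ⟨r, hr⟩ := hcs.isBounded.subset_closedBall 0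
  set A := max r 0 + 1 with hA
  have hrA : r < A := by have := le_max_left r 0; linarith
  have hApos : 0 < A := by have := le_max_right r 0; linarith
  have hnot : ∀ z : ℝ × ℝ, r < |z.1| → z ∉ tsupport u := fun z hz hmem => by
    have h1 := hr hmem
    rw [Metric.mem_closedBall, dist_zero_right] at h1
    have h2 : ‖z.1‖ ≤ ‖z‖ := norm_fst_le z
    rw [Real.norm_eq_abs] at h2
    linarith
  have h0 : ∀ x ∉ Set.Ioc (-A) A, gxF δ μ₁ μ₂ κ u (x, y) = 0 := by
    intro x hx
    refine vanish_gx _ _ _ _ (hnot (x, y) ?_)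
    simp only [Set.mem_Ioc, not_and_or, not_lt, not_le] at hx
    rcases hx with h | h
    · calc r < A := hrA
        _ ≤ |x| := by rw [abs_of_nonpos (by linarith)]; linarith
    · calc r < A := hrA
        _ ≤ |x| := le_trans h.le (le_abs_self x)
  have hPend : Pfun δ μ₁ μ₂ κ u (A, y) = 0 :=
    vanish_P _ _ _ _ (hnot (A, y) (by rw [abs_of_pos hApos]; simpa using hrA))
  have hPend' : Pfun δ μ₁ μ₂ κ u (-A, y) = 0 :=
    vanish_P _ _ _ _ (hnot (-A, y) (by rw [abs_of_neg (by linarith : -A < 0)]; simpa using hrA))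
  have step3 : (∫ x in (-A)..A, gxF δ μ₁ μ₂ κ u (x, y))
      = Pfun δ μ₁ μ₂ κ u (A, y) - Pfun δ μ₁ μ₂ κ u (-A, y) := by
    refine ftc_seg (F := fun x => Pfun δ μ₁ μ₂ κ u (x, y)) (m := y^2) (by linarith)
      ((cont_P hu).comp (by continuity))
      (fun c d => gx_slice_intervalIntegrable hu hcs y c d) (fun x _ hxm => ?_)
    exact hasDerivAt_P δ μ₁ μ₂ κ hu (by simpa [Kcp, sub_ne_zero] using hxm)
  calc (∫ x : ℝ, gxF δ μ₁ μ₂ κ u (x, y))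
      = ∫ x in Set.Ioc (-A) A, gxF δ μ₁ μ₂ κ u (x, y) :=
        (setIntegral_eq_integral_of_forall_compl_eq_zero h0).symm
    _ = ∫ x in (-A)..A, gxF δ μ₁ μ₂ κ u (x, y) :=
        (intervalIntegral.integral_of_le (by linarith)).symm
    _ = 0 := by rw [step3, hPend, hPend']; ring

lemma inner_y_zero (x : ℝ) : (∫ y : ℝ, gyF δ μ₁ μ₂ u (x, y)) = 0 := by
  obtain ⟨r, hr⟩ := hcs.isBounded.subset_closedBall 0
  set A := max r 0 + 1 with hA
  have hrA : r < A := by have := le_max_left r 0; linarith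
  have hApos : 0 < A := by have := le_max_right r 0; linarith
  have hnot : ∀ z : ℝ × ℝ, r < |z.2| → z ∉ tsupport u := fun z hz hmem => by
    have h1 := hr hmem
    rw [Metric.mem_closedBall, dist_zero_right] at h1
    have h2 : ‖z.2‖ ≤ ‖z‖ := norm_snd_le z
    rw [Real.norm_eq_abs] at h2
    linarith
  have h0 : ∀ y ∉ Set.Ioc (-A) A, gyF δ μ₁ μ₂ u (x, y) = 0 := by
    intro y hy
    refine vanish_gy _ _ _ (hnot (x, y) ?_)
    simp only [Set.mem_Ioc, not_and_or, not_lt, not_le] at hy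
    rcases hy with h | h
    · calc r < A := hrA
        _ ≤ |y| := by rw [abs_of_nonpos (by linarith)]; linarith
    · calc r < A := hrA
        _ ≤ |y| := le_trans h.le (le_abs_self y)
  have hRend : Rfun δ μ₁ μ₂ u (x, A) = 0 :=
    vanish_R _ _ _ (hnot (x, A) (by rw [abs_of_pos hApos]; simpa using hrA))
  have hRend' : Rfun δ μ₁ μ₂ u (x, -A) = 0 :=
    vanish_R _ _ _ (hnot (x, -A) (by rw [abs_of_neg (by linarith : -A < 0)]; simpa using hrA))
  have step3 : (∫ y in (-A)..A, gyF δ μ₁ μ₂ u (x, y))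
      = Rfun δ μ₁ μ₂ u (x, A) - Rfun δ μ₁ μ₂ u (x, -A) := by
    refine ftc_seg2 (F := fun t => Rfun δ μ₁ μ₂ u (x, t)) (m₁ := -Real.sqrt (max x 0)) (m₂ := Real.sqrt (max x 0))
      (by linarith) ((cont_R hu).comp (by continuity))
      (fun c d => gy_slice_intervalIntegrable hu hcs x c d) (fun y hy1 hy2 => ?_)
    refine hasDerivAt_R δ μ₁ μ₂ hu ?_
    intro hK
    have hxy : x = y^2 := by
      have : x - y^2 = 0 := by simpa [Kcp] using hK
      linarith
    have hx0 : max x 0 = x := max_eq_left (by nlinarith [sq_nonneg y])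
    have habs : Real.sqrt (max x 0) = |y| := by
      rw [hx0, hxy]
      exact Real.sqrt_sq_eq_abs y
    rcases abs_cases y with ⟨h1, _⟩ | ⟨h1, _⟩
    · exact hy2 (by rw [habs, h1])
    · exact hy1 (by rw [habs, h1]; ring)
  calc (∫ y : ℝ, gyF δ μ₁ μ₂ u (x, y))
      = ∫ y in Set.Ioc (-A) A, gyF δ μ₁ μ₂ u (x, y) :=
        (setIntegral_eq_integral_of_forall_compl_eq_zero h0).symm
    _ = ∫ y in (-A)..A, gyF δ μ₁ μ₂ u (x, y) :=
        (intervalIntegral.integral_of_le (by linarith)).symm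
    _ = 0 := by rw [step3, hRend, hRend']; ring

lemma integral_gx_global : (∫ p, gxF δ μ₁ μ₂ κ u p) = 0 := by
  have hint : Integrable (gxF δ μ₁ μ₂ κ u) ((volume : Measure ℝ).prod volume) := by
    rw [← Measure.volume_eq_prod]; exact gx_integrable hu hcs
  rw [Measure.volume_eq_prod, integral_prod_symm _ hint]
  simp [inner_x_zero hu hcs]

lemma integral_gy_global : (∫ p, gyF δ μ₁ μ₂ u p) = 0 := by
  have hint : Integrable (gyF δ μ₁ μ₂ u) ((volume : Measure ℝ).prod volume) := by
    rw [← Measure.volume_eq_prod]; exact gy_integrable hu hcs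
  rw [Measure.volume_eq_prod, integral_prod _ hint]
  simp [inner_y_zero hu hcs]

lemma key_identity {Ω : Set (ℝ × ℝ)} (hΩm : MeasurableSet Ω) (hsupp : tsupport u ⊆ Ω) :
    (∫ p in Ω, MMult δ μ₁ μ₂ u p * Lop κ u p) = ∫ p in Ω, QF δ μ₁ μ₂ κ u p := by
  have h1 : (∫ p in Ω, MMult δ μ₁ μ₂ u p * Lop κ u p)
      = ∫ p in Ω, (QF δ μ₁ μ₂ κ u p + gxF δ μ₁ μ₂ κ u p + gyF δ μ₁ μ₂ u p) :=
    setIntegral_congr_fun hΩm (fun p _ => identity δ μ₁ μ₂ κ hu p)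
  have hq : IntegrableOn (QF δ μ₁ μ₂ κ u) Ω volume := (q_integrable hu hcs).integrableOn
  have hgx : IntegrableOn (gxF δ μ₁ μ₂ κ u) Ω volume := (gx_integrable hu hcs).integrableOn
  have hgy : IntegrableOn (gyF δ μ₁ μ₂ u) Ω volume := (gy_integrable hu hcs).integrableOn
  have h2 : (∫ p in Ω, (QF δ μ₁ μ₂ κ u p + gxF δ μ₁ μ₂ κ u p + gyF δ μ₁ μ₂ u p))
      = (∫ p in Ω, QF δ μ₁ μ₂ κ u p) + (∫ p in Ω, gxF δ μ₁ μ₂ κ u p)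
        + ∫ p in Ω, gyF δ μ₁ μ₂ u p := by
    have e1 := integral_add (μ := volume.restrict Ω) (hq.add hgx) hgy
    have e2 := integral_add (μ := volume.restrict Ω) hq hgx
    simp only [Pi.add_apply] at e1
    rw [e1, e2]
  have h3 : (∫ p in Ω, gxF δ μ₁ μ₂ κ u p) = 0 := by
    rw [setIntegral_eq_integral_of_forall_compl_eq_zero
      (fun p hp => vanish_gx _ _ _ _ (fun hmem => hp (hsupp hmem)))]
    exact integral_gx_global hu hcs
  have h4 : (∫ p in Ω, gyF δ μ₁ μ₂ u p) = 0 := by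
    rw [setIntegral_eq_integral_of_forall_compl_eq_zero
      (fun p hp => vanish_gy _ _ _ (fun hmem => hp (hsupp hmem)))]
    exact integral_gy_global hu hcs
  rw [h1, h2, h3, h4]
  ring

end inner

/-! ### The pointwise inequality -/

lemma quad_ineq {X C s yy a b : ℝ} (hX : (3/2)*yy^2 ≤ X) (hC : (13/8 : ℝ) ≤ C) (hs : s^2 ≤ 1) :
    0 ≤ X*a^2 + 2*yy*s*(a*b) + C*b^2 := by
  nlinarith [sq_nonneg (yy*s*a + C*b), mul_nonneg (sub_nonneg.2 hX) (sub_nonneg.2 hC),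
    mul_nonneg (mul_nonneg (sub_nonneg.2 hs) (sq_nonneg yy)) (sq_nonneg a),
    sq_nonneg a, sq_nonneg b, sq_nonneg (yy*a)]

set_option maxHeartbeats 1000000 in
lemma pointwise_bound {δ μ₁ μ₂ κ : ℝ} {u : ℝ × ℝ → ℝ} (hδ : 0 < δ) (hδ1 : δ ≤ 1/8)
    (hδ2 : δ ≤ Real.exp μ₂ / 12) (hκ1 : 1 ≤ κ) (hκ2 : κ ≤ 2) (hμ₁ : 0 ≤ μ₁)
    (hμ₂neg : μ₂ < 0) {p : ℝ × ℝ}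
    (hK1 : Kcp p > 0 → Kcp p ≤ μ₁) (hK2 : ¬ Kcp p > 0 → μ₂ ≤ Kcp p) :
    δ * (|Kcp p| * (d1 u p)^2 + (d2 u p)^2) ≤ QF δ μ₁ μ₂ κ u p := by
  have hvpos : 0 < bMult δ μ₁ μ₂ p := bMult_pos δ μ₁ μ₂ p
  set t := Kcp p with hts
  set a := d1 u p with has
  set b := d2 u p with hbs
  set yy := p.2 with hys
  set v := bMult δ μ₁ μ₂ p with hv
  set w := wcoef δ μ₁ μ₂ p with hw
  set S := w * v with hS
  -- bounds on S and the first coefficient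
  have key : (0 < S ∧ S ≤ 1/2) ∧ δ * |t| ≤ 2*δ*t - (1/2)*S*t + (κ-1/2)*v := by
    by_cases ht : t > 0
    · have hwdef : w = 2*δ/Real.exp (2*δ*μ₁) := by rw [hw, wcoef, if_pos ht]
      have hvdef : v = Real.exp (2*δ*t/Real.exp (2*δ*μ₁)) := by rw [hv, bMult, if_pos ht]
      have hQ1 : (1:ℝ) ≤ Real.exp (2*δ*μ₁) := Real.one_le_exp (by positivity)
      have hQpos : (0:ℝ) < Real.exp (2*δ*μ₁) := Real.exp_pos _
      have htμ : t ≤ μ₁ := hK1 ht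
      have hvle : v ≤ Real.exp (2*δ*μ₁) := by
        rw [hvdef]
        apply Real.exp_le_exp.mpr
        calc 2*δ*t/Real.exp (2*δ*μ₁) ≤ 2*δ*t := by
              apply div_le_self (by positivity) hQ1
          _ ≤ 2*δ*μ₁ := by
              have := mul_le_mul_of_nonneg_left htμ (by positivity : (0:ℝ) ≤ 2*δ)
              linarith
      have hSle : S ≤ 2*δ := by
        rw [hS, hwdef]
        calc 2*δ/Real.exp (2*δ*μ₁) * v ≤ 2*δ/Real.exp (2*δ*μ₁) * Real.exp (2*δ*μ₁) :=
              mul_le_mul_of_nonneg_left hvle (by positivity)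
          _ = 2*δ := div_mul_cancel₀ _ (ne_of_gt hQpos)
      have hSpos : 0 < S := by rw [hS, hwdef]; positivity
      refine ⟨⟨hSpos, by linarith⟩, ?_⟩
      rw [abs_of_pos ht]
      have h1 := mul_le_mul_of_nonneg_right hSle ht.le
      have h2 : 0 ≤ (κ - 1/2) * v := mul_nonneg (by linarith) hvpos.le
      linarith
    · have hwdef : w = 6*δ/Real.exp μ₂ := by rw [hw, wcoef, if_neg ht]
      have hvdef : v = Real.exp (6*δ*t/Real.exp μ₂) := by rw [hv, bMult, if_neg ht]
      have hQpos : (0:ℝ) < Real.exp μ₂ := Real.exp_pos _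
      have htle : t ≤ 0 := not_lt.mp ht
      have htμ : μ₂ ≤ t := hK2 ht
      have hW1 : 6*δ/Real.exp μ₂ ≤ 1/2 := by
        rw [div_le_iff₀ hQpos]; linarith [hδ2, hQpos]
      have harg : μ₂ ≤ 6*δ*t/Real.exp μ₂ := by
        rw [div_eq_mul_inv]
        have h1 : 6*δ*t*(Real.exp μ₂)⁻¹ = (6*δ/Real.exp μ₂) * t := by
          field_simp
        rw [h1]
        nlinarith [mul_nonneg (sub_nonneg.2 (hW1.trans (by norm_num : (1:ℝ)/2 ≤ 1)))
          (neg_nonneg.2 htle)]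
      have hvge : Real.exp μ₂ ≤ v := by rw [hvdef]; exact Real.exp_le_exp.mpr harg
      have hvle1 : v ≤ 1 := by
        rw [hvdef]
        calc Real.exp (6*δ*t/Real.exp μ₂) ≤ Real.exp 0 := by
              apply Real.exp_le_exp.mpr
              apply div_nonpos_of_nonpos_of_nonneg (by nlinarith) hQpos.le
          _ = 1 := Real.exp_zero
      have hSpos : 0 < S := by
        rw [hS, hwdef]
        exact mul_pos (by positivity) hvpos
      have hSle : S ≤ 1/2 := by
        rw [hS, hwdef]
        calc 6*δ/Real.exp μ₂ * v ≤ 6*δ/Real.exp μ₂ * 1 :=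
              mul_le_mul_of_nonneg_left hvle1 (by positivity)
          _ ≤ 1/2 := by rw [mul_one]; exact hW1
      refine ⟨⟨hSpos, hSle⟩, ?_⟩
      rw [abs_of_nonpos htle]
      -- need: δ*(-t) ≤ 2δt - (1/2)S t + (κ-1/2)v, i.e. 0 ≤ 3δt - (1/2)S t + (κ-1/2)v
      have hvt : v * t ≤ Real.exp μ₂ * t := by
        nlinarith [mul_nonneg (sub_nonneg.2 hvge) (neg_nonneg.2 htle)]
      have hDQ : (6*δ/Real.exp μ₂) * Real.exp μ₂ = 6*δ := div_mul_cancel₀ _ (ne_of_gt hQpos)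
      have hSt : (1/2)*S*t ≤ 3*δ*t := by
        rw [hS, hwdef]
        nlinarith [mul_le_mul_of_nonneg_left hvt (by positivity : (0:ℝ) ≤ (1/2)*(6*δ/Real.exp μ₂))]
      have h2 : 0 ≤ (κ - 1/2) * v := mul_nonneg (by linarith) hvpos.le
      linarith [hSt, h2]
  obtain ⟨⟨hS0, hS12⟩, hA⟩ := key
  -- the quadratic-form step
  have hX : (3/2)*yy^2 ≤ (2*δ*t - (1/2)*S*t + (κ-1/2)*v + 2*(1-2*δ)*yy^2) - δ*|t| := by
    nlinarith [sq_nonneg yy]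
  have hC : (13/8 : ℝ) ≤ (2 - 2*δ + S/2) - δ := by linarith
  have hs : (S + (κ-1)*(2*δ-1))^2 ≤ 1 := by
    have hq1 : (κ-1)*(2*δ-1) ≤ 0 :=
      mul_nonpos_of_nonneg_of_nonpos (by linarith) (by linarith)
    have hq2 : -1 ≤ (κ-1)*(2*δ-1) := by nlinarith
    have hb1 : S + (κ-1)*(2*δ-1) ≤ 1 := by linarith
    have hb2 : -1 ≤ S + (κ-1)*(2*δ-1) := by linarith
    nlinarith [mul_nonneg (by linarith : (0:ℝ) ≤ 1 - (S + (κ-1)*(2*δ-1)))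
      (by linarith : (0:ℝ) ≤ 1 + (S + (κ-1)*(2*δ-1)))]
  have hfin := quad_ineq (a := a) (b := b) hX hC hs
  have hiden : QF δ μ₁ μ₂ κ u p - δ * (|t| * a^2 + b^2)
      = ((2*δ*t - (1/2)*S*t + (κ-1/2)*v + 2*(1-2*δ)*yy^2) - δ*|t|)*a^2
        + 2*yy*(S + (κ-1)*(2*δ-1))*(a*b) + ((2 - 2*δ + S/2) - δ)*b^2 := by
    simp only [QF, ← hts, ← has, ← hbs, ← hys, ← hv, ← hw, ← hS]
    ring
  linarith [hfin, hiden.ge, hiden.le]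

end CP

open CP in
/-- The lower estimate (Mu, Lu) ≥ δ‖u‖²_{H¹₀(Ω;𝒦)} from the proof of
Lemma 3.1, case κ ∈ [1,2]. -/
theorem lower_estimate_kappa_ge_one (Ω : Set (ℝ × ℝ)) (hΩo : IsOpen Ω)
    (hΩb : Bornology.IsBounded Ω)
    (hplus : (Ω ∩ {p | Kcp p > 0}).Nonempty)
    (hminus : (Ω \ {p | Kcp p > 0}).Nonempty)
    (μ₁ μ₂ : ℝ)
    (hμ₁ : μ₁ = sSup (Kcp '' (Ω ∩ {p | Kcp p > 0})))
    (hμ₂ : μ₂ = sInf (Kcp '' (Ω \ {p | Kcp p > 0})))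
    (hμ₂neg : μ₂ < 0)
    (κ : ℝ) (hκ : κ ∈ Set.Icc (1 : ℝ) 2) :
    ∃ δ₀ > (0 : ℝ), ∀ δ : ℝ, 0 < δ → δ ≤ δ₀ →
      ∀ u : ℝ × ℝ → ℝ, ContDiff ℝ (⊤ : ℕ∞) u → HasCompactSupport u → tsupport u ⊆ Ω →
        (∫ p in Ω, MMult δ μ₁ μ₂ u p * Lop κ u p) ≥
          δ * ∫ p in Ω, (|Kcp p| * (pdx u p) ^ 2 + (pdy u p) ^ 2) := by
  obtain ⟨hκ1, hκ2⟩ := hκ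
  have hexp := Real.exp_pos μ₂
  refine ⟨min (1/8) (Real.exp μ₂ / 12), lt_min (by norm_num) (by positivity), ?_⟩
  intro δ hδ0 hδδ u hu hcs hsupp
  have hδ1 : δ ≤ 1/8 := le_trans hδδ (min_le_left _ _)
  have hδ2 : δ ≤ Real.exp μ₂ / 12 := le_trans hδδ (min_le_right _ _)
  have hΩm : MeasurableSet Ω := hΩo.measurableSet
  obtain ⟨r, hr⟩ := hΩb.subset_closedBall 0
  have hKcompact : IsCompact (Kcp '' Metric.closedBall (0:ℝ×ℝ) r) :=
    (isCompact_closedBall _ _).image continuous_Kcp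
  have hbddA : BddAbove (Kcp '' (Ω ∩ {p | Kcp p > 0})) :=
    hKcompact.bddAbove.mono (Set.image_mono (fun q hq => hr hq.1))
  have hbddB : BddBelow (Kcp '' (Ω \ {p | Kcp p > 0})) :=
    hKcompact.bddBelow.mono (Set.image_mono (fun q hq => hr hq.1))
  have hK1 : ∀ p ∈ Ω, Kcp p > 0 → Kcp p ≤ μ₁ := fun p hp hpos => by
    rw [hμ₁]; exact le_csSup hbddA ⟨p, ⟨hp, hpos⟩, rfl⟩
  have hK2 : ∀ p ∈ Ω, ¬ Kcp p > 0 → μ₂ ≤ Kcp p := fun p hp hneg => by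
    rw [hμ₂]; exact csInf_le hbddB ⟨p, ⟨hp, hneg⟩, rfl⟩
  have hμ₁0 : 0 ≤ μ₁ := by
    obtain ⟨p₀, hp₀⟩ := hplus
    have h := hK1 p₀ hp₀.1 hp₀.2
    have h2 : (0:ℝ) < Kcp p₀ := hp₀.2
    linarith
  have hd := hu.differentiable (by simp)
  rw [ge_iff_le, key_identity hu hcs hΩm hsupp]
  have hrw : (∫ p in Ω, (|Kcp p| * (pdx u p)^2 + (pdy u p)^2))
      = ∫ p in Ω, (|Kcp p| * (d1 u p)^2 + (d2 u p)^2) := by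
    rw [pdx_eq hd, pdy_eq hd]
  rw [hrw]
  have hrcont : Continuous (fun p => |Kcp p| * (d1 u p)^2 + (d2 u p)^2) :=
    ((continuous_Kcp.abs).mul (((contDiff_d1 hu).continuous).pow 2)).add
      (((contDiff_d2 hu).continuous).pow 2)
  have hrint : Integrable (fun p => |Kcp p| * (d1 u p)^2 + (d2 u p)^2) :=
    hrcont.integrable_of_hasCompactSupport
      (hcs_of_vanish hcs (fun p hp => by simp [vanish_d1 hp, vanish_d2 hp]))
  calc δ * ∫ p in Ω, (|Kcp p| * (d1 u p)^2 + (d2 u p)^2)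
      = ∫ p in Ω, δ * (|Kcp p| * (d1 u p)^2 + (d2 u p)^2) := (integral_const_mul δ _).symm
    _ ≤ ∫ p in Ω, QF δ μ₁ μ₂ κ u p := by
        apply setIntegral_mono_on (hrint.integrableOn.const_mul δ)
          ((q_integrable hu hcs).integrableOn) hΩm
        intro p hp
        exact pointwise_bound hδ0 hδ1 hδ2 hκ1 hκ2 hμ₁0 hμ₂neg (hK1 p hp) (hK2 p hp)
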